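/- Let 1 < p < 2 and let φ and B be as above. Then for all x,z > 0 with s = x^{1-p}z, B_{xx}(x,z) = x^{-p} z² φ'(s)/φ(s)², B_{zz}(x,z) = x^{2-p} φ'(s), and the discriminant identity B_{xx}(x,z)·B_{zz}(x,z) = (|B_{xz}(x,z)| + 1)² holds. -/

import Mathlib

/-!
Write `s = x ^ (1 - p) * z`. The differential equation `s φ'(s) = φ (1 + φ) / (1 + (p - 1) φ)`
collapses the first partial derivatives to `B_x = z ((2 - p) φ(s) + 1) / ((p - 1) φ(s))` and
`B_z = x φ(s)`. Differentiating once more gives `B_xx` and `B_zz`, and since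
`x ^ (-p) z² · x ^ (2 - p) = s²`, their product is `(s φ'(s) / φ(s))² = ((1 + φ) / (1 + (p - 1) φ))²`,
which is `(B_xz + 1)²` because `B_xz = (2 - p) φ / (1 + (p - 1) φ) ≥ 0` for `p ≤ 2`.
-/

noncomputable def B (p : ℝ) (φ : ℝ → ℝ) (x z : ℝ) : ℝ :=
  x * z * ((p - 1) / p * φ (x ^ (1 - p) * z) + (2 - p) / (p * (p - 1))
    + 1 / (p * (p - 1) * φ (x ^ (1 - p) * z)))

lemma hasDerivAt_rpow_one_sub_mul_const (p z : ℝ) {x : ℝ} (hx : 0 < x) :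
    HasDerivAt (fun t : ℝ => t ^ (1 - p) * z) ((1 - p) * x ^ (-p) * z) x := by
  simpa only [sub_sub_cancel_left] using
    (Real.hasDerivAt_rpow_const (p := 1 - p) (Or.inl hx.ne')).mul_const z

lemma rpow_neg_mul_eq_div (p z : ℝ) {x : ℝ} (hx : 0 < x) :
    x ^ (-p) * z = x ^ (1 - p) * z / x := by
  rw [eq_div_iff hx.ne', sub_eq_neg_add, Real.rpow_add hx, Real.rpow_one]
  ring

lemma rpow_two_sub_eq_mul (p : ℝ) {x : ℝ} (hx : 0 < x) : x ^ (2 - p) = x * x ^ (1 - p) := by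
  rw [show 2 - p = 1 + (1 - p) by ring, Real.rpow_add hx, Real.rpow_one]

section

variable {p : ℝ} {φ : ℝ → ℝ} (hp : 1 < p) (hφpos : ∀ s, 0 < s → 0 < φ s)
  (hφ' : ∀ s, 0 < s → HasDerivAt φ (φ s * (1 + φ s) / (s * (1 + (p - 1) * φ s))) s)
include hp hφpos hφ'

lemma hasDerivAt_B_left {x z : ℝ} (hx : 0 < x) (hz : 0 < z) :
    HasDerivAt (fun t => B p φ t z)
      (z * ((2 - p) * φ (x ^ (1 - p) * z) + 1) / ((p - 1) * φ (x ^ (1 - p) * z))) x := by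
  have hs : 0 < x ^ (1 - p) * z := by positivity
  have hφs0 := hφpos _ hs
  have hp1 : 0 < p - 1 := by linarith
  have hφs : HasDerivAt (fun t => φ (t ^ (1 - p) * z)) _ x :=
    (hφ' _ hs).comp x (hasDerivAt_rpow_one_sub_mul_const p z hx)
  have hinner := ((hφs.const_mul ((p - 1) / p)).add_const ((2 - p) / (p * (p - 1)))).add
    ((hasDerivAt_const x (1 : ℝ)).div (hφs.const_mul (p * (p - 1))) (by positivity))
  refine (((hasDerivAt_id x).mul_const z).mul hinner).congr_deriv ?_
  simp only [id, Pi.add_apply, Pi.div_apply]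
  rw [mul_assoc (1 - p), rpow_neg_mul_eq_div p z hx]
  set s := x ^ (1 - p) * z
  have hden : 0 < 1 + (p - 1) * φ s := by positivity
  field_simp
  ring

lemma hasDerivAt_B_right {x z : ℝ} (hx : 0 < x) (hz : 0 < z) :
    HasDerivAt (fun t => B p φ x t) (x * φ (x ^ (1 - p) * z)) z := by
  have hs : 0 < x ^ (1 - p) * z := by positivity
  have hφs0 := hφpos _ hs
  have hp1 : 0 < p - 1 := by linarith
  have hφs : HasDerivAt (fun t => φ (x ^ (1 - p) * t)) _ z :=
    (hφ' _ hs).comp z ((hasDerivAt_id z).const_mul (x ^ (1 - p)))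
  have hinner := ((hφs.const_mul ((p - 1) / p)).add_const ((2 - p) / (p * (p - 1)))).add
    ((hasDerivAt_const z (1 : ℝ)).div (hφs.const_mul (p * (p - 1))) (by positivity))
  refine (((hasDerivAt_id z).const_mul x).mul hinner).congr_deriv ?_
  simp only [id, Pi.add_apply, Pi.div_apply, mul_one]
  set s := x ^ (1 - p) * z
  rw [show x ^ (1 - p) = s / z by rw [eq_div_iff hz.ne']]
  have hden : 0 < 1 + (p - 1) * φ s := by positivity
  field_simp
  ring

lemma hasDerivAt_deriv_B_left {x z : ℝ} (hx : 0 < x) (hz : 0 < z) :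
    HasDerivAt (fun x' => deriv (fun t => B p φ t z) x')
      (x ^ (-p) * z ^ 2 * deriv φ (x ^ (1 - p) * z) / (φ (x ^ (1 - p) * z)) ^ 2) x := by
  have hs : 0 < x ^ (1 - p) * z := by positivity
  have hφs0 := hφpos _ hs
  have hp1 : 0 < p - 1 := by linarith
  have hφs : HasDerivAt (fun t => φ (t ^ (1 - p) * z)) _ x :=
    (hφ' _ hs).differentiableAt.hasDerivAt.comp x (hasDerivAt_rpow_one_sub_mul_const p z hx)
  have hBx := (((hφs.const_mul (2 - p)).add_const 1).const_mul z).div (hφs.const_mul (p - 1))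
    (by positivity)
  refine HasDerivAt.congr_of_eventuallyEq ?_
    (Filter.eventually_of_mem (Ioi_mem_nhds hx) fun y hy =>
      (hasDerivAt_B_left hp hφpos hφ' (x := y) hy hz).deriv)
  refine hBx.congr_deriv ?_
  field_simp
  ring

lemma hasDerivAt_deriv_B_right {x z : ℝ} (hx : 0 < x) (hz : 0 < z) :
    HasDerivAt (fun z' => deriv (fun t => B p φ x t) z')
      (x ^ (2 - p) * deriv φ (x ^ (1 - p) * z)) z := by
  have hs : 0 < x ^ (1 - p) * z := by positivity
  have hBz : HasDerivAt (fun t => x * φ (x ^ (1 - p) * t)) _ z :=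
    ((hφ' _ hs).differentiableAt.hasDerivAt.comp z
      ((hasDerivAt_id z).const_mul (x ^ (1 - p)))).const_mul x
  refine HasDerivAt.congr_of_eventuallyEq ?_
    (Filter.eventually_of_mem (Ioi_mem_nhds hz) fun y hy =>
      (hasDerivAt_B_right hp hφpos hφ' hx (z := y) hy).deriv)
  refine hBz.congr_deriv ?_
  rw [rpow_two_sub_eq_mul p hx]
  simp only [mul_one]
  ring

end

lemma rpow_neg_mul_rpow_two_sub (p z : ℝ) {x : ℝ} (hx : 0 < x) :
    x ^ (-p) * z ^ 2 * x ^ (2 - p) = (x ^ (1 - p) * z) ^ 2 := by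
  have h : x ^ (-p) * x ^ (2 - p) = x ^ (1 - p) * x ^ (1 - p) := by
    rw [← Real.rpow_add hx, ← Real.rpow_add hx]; ring_nf
  linear_combination z ^ 2 * h

lemma B_discriminant_identity {p x z a : ℝ} (hp1 : 1 < p) (hp2 : p < 2) (hx : 0 < x) (hz : 0 < z)
    (ha : 0 < a) :
    x ^ (-p) * z ^ 2 * (a * (1 + a) / (x ^ (1 - p) * z * (1 + (p - 1) * a))) / a ^ 2 *
        (x ^ (2 - p) * (a * (1 + a) / (x ^ (1 - p) * z * (1 + (p - 1) * a))))
      = (|(2 - p) * a / (1 + (p - 1) * a)| + 1) ^ 2 := by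
  have hden : 0 < 1 + (p - 1) * a := by nlinarith
  have hs : 0 < x ^ (1 - p) * z := by positivity
  rw [abs_of_nonneg (by have : 0 < 2 - p := (by linarith); positivity),
    show ∀ b c : ℝ, x ^ (-p) * z ^ 2 * b / a ^ 2 * (x ^ (2 - p) * c)
      = x ^ (-p) * z ^ 2 * x ^ (2 - p) * b * c / a ^ 2 from fun _ _ => by ring,
    rpow_neg_mul_rpow_two_sub p z hx, div_add_one hden.ne']
  field_simp
  ring

theorem stmt_13 (p : ℝ) (hp1 : 1 < p) (hp2 : p < 2) (φ : ℝ → ℝ)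
    (hφpos : ∀ s, 0 < s → 0 < φ s)
    (hφ' : ∀ s, 0 < s →
      HasDerivAt φ (φ s * (1 + φ s) / (s * (1 + (p - 1) * φ s))) s) :
    ∀ x z : ℝ, 0 < x → 0 < z →
      HasDerivAt (fun x' => deriv (fun t => B p φ t z) x')
        (x ^ (-p) * z ^ 2 * deriv φ (x ^ (1 - p) * z) / (φ (x ^ (1 - p) * z)) ^ 2) x ∧
      HasDerivAt (fun z' => deriv (fun t => B p φ x t) z')
        (x ^ (2 - p) * deriv φ (x ^ (1 - p) * z)) z ∧
      (x ^ (-p) * z ^ 2 * deriv φ (x ^ (1 - p) * z) / (φ (x ^ (1 - p) * z)) ^ 2) *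
          (x ^ (2 - p) * deriv φ (x ^ (1 - p) * z))
        = (|(2 - p) * φ (x ^ (1 - p) * z) / (1 + (p - 1) * φ (x ^ (1 - p) * z))| + 1) ^ 2 := by
  intro x z hx hz
  have hs : 0 < x ^ (1 - p) * z := by positivity
  refine ⟨hasDerivAt_deriv_B_left hp1 hφpos hφ' hx hz,
    hasDerivAt_deriv_B_right hp1 hφpos hφ' hx hz, ?_⟩
  rw [(hφ' _ hs).deriv]
  exact B_discriminant_identity hp1 hp2 hx hz (hφpos _ hs)
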